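/- Let K be a finite field, u a unit of K with u ≠ 1 and u ≠ −1, and let m be the size of the u-trinomial minimal solution over K. Then the u-trinomial minimal solution over K is irreducible if and only if for every integer l with 1 ≤ l ≤ ⌊m/6⌋ one has u^{2l} + u^{l+1} − 1 ≠ 0 and u^{2l} − u^{l+1} − 1 ≠ 0. -/

import Mathlib

/-!
A window `w` of the cyclic word `c = (u, v, v)^k` (with `v = u⁻¹`) is the interior of `b` in
a splitting `c ∼ a ⊕ b` with `b` a λ-quiddity exactly when the corner entry `M(w)₀₀` is `±1`:
the two ends of `b` can then be solved for, because `det M(w) = 1`. The matrices of the three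
rotations `(u,v,v)`, `(v,v,u)`, `(v,u,v)` of the block are triangular with diagonal entries
`-u` and `-v`, so the corner entry of a window is `0`, `±u^m` or `±v^m`, except for the
windows `(v,v,u)^q (v,v)`, whose corner entry squares to `1` iff `u` is a root of
`X^{2l} ± X^{l+1} - 1` with `l = q + 1`. Minimality of `k` rules out `u^{2m} = 1` for
`0 < m < k`, and since `u^{2k} = 1` the substitution `l ↦ k - l` preserves these roots, so
`l ≤ k/2` suffices.
-/

namespace Quiddity

variable {A : Type*} [CommRing A]

/-- `mMat [a₁, …, aₙ]` is the matrix product `[[aₙ,-1],[1,0]] ⋯ [[a₁,-1],[1,0]]`. -/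
def mMat : List A → Matrix (Fin 2) (Fin 2) A
  | [] => 1
  | a :: t => mMat t * !![a, -1; 1, 0]

/-- Continuant: `cont [] = K₀ = 1`, `cont [a] = K₁(a) = a`, and the continuant recursion. -/
def cont : List A → A
  | [] => 1
  | [a] => a
  | a :: b :: t => a * cont (b :: t) - cont t

/-- A λ-quiddity is a tuple with `Mₙ(a₁,…,aₙ) = ± Id`. -/
def IsQuiddity (l : List A) : Prop := mMat l = 1 ∨ mMat l = -1

/-- The sum `⊕` of two tuples (meaningful for tuples of length ≥ 2):
`(a₁,…,aₘ) ⊕ (b₁,…,b_l) = (a₁+b_l, a₂,…,a_{m−1}, aₘ+b₁, b₂,…,b_{l−1})`. -/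
def oplus (la lb : List A) : List A :=
  (la.headD 0 + lb.getLastD 0) ::
    (la.tail.dropLast ++ (la.getLastD 0 + lb.headD 0) :: lb.tail.dropLast)

/-- Two tuples are equivalent if one is a cyclic permutation of the other or of its
reversal. -/
def TupleEquiv (l l' : List A) : Prop :=
  List.IsRotated l l' ∨ List.IsRotated l.reverse l'

/-- A λ-quiddity `c` is reducible if `c ∼ a ⊕ b` with `b` a λ-quiddity and both of size ≥ 3. -/
def QuiddityReducible (c : List A) : Prop :=
  ∃ a b : List A, 3 ≤ a.length ∧ 3 ≤ b.length ∧ IsQuiddity b ∧ TupleEquiv c (oplus a b)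

/-- `(a, b, a, b, …, a, b)` with `k` repetitions of the pair `(a, b)` (size `2k`). -/
def dynList : ℕ → A → A → List A
  | 0, _, _ => []
  | k + 1, a, b => a :: b :: dynList k a b

/-- `(u, v, v, u, v, v, …, u, v, v)` with `k` repetitions of the block `(u, v, v)`
(size `3k`). -/
def triList : ℕ → A → A → List A
  | 0, _, _ => []
  | k + 1, a, b => a :: b :: b :: triList k a b

end Quiddity

open Quiddity

namespace Quiddity

section Lists

variable {α : Type*}

theorem flatten_replicate_append_comm (γ δ : List α) (k : ℕ) :
    (List.replicate k (γ ++ δ)).flatten ++ γ = γ ++ (List.replicate k (δ ++ γ)).flatten := by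
  induction k with
  | zero => simp
  | succ k ih => simp [List.replicate_succ, ih]

theorem rotate_flatten_replicate_append (γ δ : List α) (k : ℕ) :
    (List.replicate k (γ ++ δ)).flatten.rotate γ.length =
      (List.replicate k (δ ++ γ)).flatten := by
  cases k with
  | zero => simp
  | succ k =>
    rw [List.replicate_succ, List.flatten_cons, List.append_assoc, List.rotate_append_length_eq,
      List.append_assoc, flatten_replicate_append_comm, List.replicate_succ, List.flatten_cons,
      List.append_assoc]

theorem rotate_flatten_replicate (β : List α) (k n : ℕ) :
    (List.replicate k β).flatten.rotate n = (List.replicate k (β.rotate n)).flatten := by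
  induction n with
  | zero => simp
  | succ n ih =>
    rw [← List.rotate_rotate, ih, ← List.rotate_rotate β n 1]
    rcases β.rotate n with _ | ⟨b, β'⟩
    · simp
    · simpa using rotate_flatten_replicate_append [b] β' k

theorem take_flatten_replicate (β : List α) {k q s : ℕ} (hq : q < k) (hs : s ≤ β.length) :
    (List.replicate k β).flatten.take (β.length * q + s) =
      (List.replicate q β).flatten ++ β.take s := by
  obtain ⟨k, rfl⟩ := Nat.exists_eq_add_of_lt hq
  induction q generalizing k with
  | zero => simp [List.replicate_succ, List.take_append_of_le_length hs]
  | succ q ih =>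
    rw [show q + 1 + k + 1 = (q + k + 1) + 1 by omega, List.replicate_succ, List.flatten_cons,
      Nat.mul_succ, Nat.add_right_comm, Nat.add_comm _ β.length, List.take_length_add_append,
      ih k (by omega), List.replicate_succ, List.flatten_cons, List.append_assoc]

theorem exists_eq_cons_append_singleton {l : List α} (hl : 2 ≤ l.length) :
    ∃ x m y, l = x :: m ++ [y] := by
  rcases l with _ | ⟨x, t⟩
  · simp at hl
  · have ht : t ≠ [] := by rintro rfl; simp at hl
    exact ⟨x, t.dropLast, t.getLast ht, by rw [List.cons_append, List.dropLast_append_getLast]⟩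

theorem triList_eq_flatten_replicate (k : ℕ) (a b : α) :
    triList k a b = (List.replicate k [a, b, b]).flatten := by
  induction k with
  | zero => rfl
  | succ k ih => simp [triList, ih, List.replicate_succ]

theorem length_triList (k : ℕ) (a b : α) : (triList k a b).length = 3 * k := by
  simp [triList_eq_flatten_replicate, mul_comm]

theorem triList_append (m n : ℕ) (a b : α) :
    triList m a b ++ triList n a b = triList (m + n) a b := by
  induction m with
  | zero => simp [triList]
  | succ m ih => simp [triList, ih, Nat.succ_add]

theorem reverse_triList (k : ℕ) (a b : α) :
    (triList k a b).reverse = (triList k a b).rotate 1 := by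
  rw [triList_eq_flatten_replicate, List.reverse_flatten, List.map_replicate,
    List.reverse_replicate, rotate_flatten_replicate]
  rfl

end Lists

variable {A : Type*} [CommRing A]

theorem mMat_append (l₁ l₂ : List A) : mMat (l₁ ++ l₂) = mMat l₂ * mMat l₁ := by
  induction l₁ with
  | nil => simp [mMat]
  | cons a t ih => simp [mMat, ih, mul_assoc]

theorem mMat_flatten_replicate (β : List A) (q : ℕ) :
    mMat (List.replicate q β).flatten = mMat β ^ q := by
  induction q with
  | zero => rfl
  | succ q ih => rw [List.replicate_succ, List.flatten_cons, mMat_append, ih, pow_succ]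

theorem mMat_eq_of_flatten_replicate_eq_append {β w P : List A} {k : ℕ}
    (h : (List.replicate k β).flatten = w ++ P) (hP : P ≠ []) :
    mMat w = mMat (β.take (w.length % β.length)) * mMat β ^ (w.length / β.length) := by
  have hlen := congrArg List.length h
  simp only [List.length_flatten, List.map_replicate, List.sum_replicate, List.length_append,
    smul_eq_mul] at hlen
  have hP0 : 0 < P.length := List.length_pos_of_ne_nil hP
  have hβ : 0 < β.length := Nat.pos_of_ne_zero fun h0 => by simp [h0] at hlen; omega
  have hw : w = (List.replicate (w.length / β.length) β).flatten ++
      β.take (w.length % β.length) := by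
    rw [← take_flatten_replicate β (k := k), Nat.div_add_mod, h, List.take_left]
    · exact Nat.div_lt_of_lt_mul (by rw [mul_comm, hlen]; omega)
    · exact (Nat.mod_lt _ hβ).le
  conv_lhs => rw [hw]
  rw [mMat_append, mMat_flatten_replicate]

theorem det_mMat (l : List A) : (mMat l).det = 1 := by
  induction l with
  | nil => simp [mMat]
  | cons a t ih => simp [mMat, Matrix.det_mul, ih, Matrix.det_fin_two_of]

theorem mMat_cons_append_singleton (x y : A) (w : List A) :
    mMat (x :: w ++ [y]) = !![y, -1; 1, 0] * mMat w * !![x, -1; 1, 0] := by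
  simp [mMat_append, mMat]

theorem sq_mMat_zero_zero_of_isQuiddity {x y : A} {w : List A}
    (h : IsQuiddity (x :: w ++ [y])) : mMat w 0 0 ^ 2 = 1 := by
  have h11 : mMat (x :: w ++ [y]) 1 1 = -mMat w 0 0 := by
    rw [mMat_cons_append_singleton, Matrix.eta_fin_two (mMat w)]
    simp
  rw [← neg_sq, ← h11]
  rcases h with h | h <;> rw [h] <;> simp

theorem isQuiddity_of_mMat_eq [IsDomain A] {l : List A} {x : A} (h : mMat l = !![x, 0; 0, x])
    (hx : x ^ 2 = 1) : IsQuiddity l := by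
  rcases sq_eq_one_iff.mp hx with rfl | rfl
  · left
    rw [h, Matrix.one_fin_two]
  · right
    rw [h]
    ext i j
    fin_cases i <;> fin_cases j <;> simp

/-- The ends are chosen so that `!![y, -1; 1, 0] * W * !![x, -1; 1, 0] = -W 0 0 • 1`,
using `det W = 1`. -/
theorem isQuiddity_of_sq_mMat_zero_zero [IsDomain A] {w : List A} (h : mMat w 0 0 ^ 2 = 1) :
    IsQuiddity (-(mMat w 0 0 * mMat w 0 1) :: w ++ [mMat w 0 0 * mMat w 1 0]) := by
  have hdet := det_mMat w
  rw [Matrix.det_fin_two] at hdet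
  have hM : mMat (-(mMat w 0 0 * mMat w 0 1) :: w ++ [mMat w 0 0 * mMat w 1 0]) =
      !![-mMat w 0 0, 0; 0, -mMat w 0 0] := by
    rw [mMat_cons_append_singleton, Matrix.eta_fin_two (mMat w)]
    ext i j
    fin_cases i <;> fin_cases j <;> simp
    · linear_combination (mMat w 1 1 - mMat w 0 0 * mMat w 0 1 * mMat w 1 0) * h -
        mMat w 0 0 * hdet
    · linear_combination (-mMat w 1 0) * h
    · linear_combination (-mMat w 0 1) * h
  exact isQuiddity_of_mMat_eq hM (by rw [neg_sq, h])

theorem oplus_cons_append (a₀ a₁ x y : A) (m w : List A) :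
    oplus (a₀ :: m ++ [a₁]) (x :: w ++ [y]) = (a₀ + y) :: (m ++ (a₁ + x) :: w) := by
  rw [oplus, List.getLastD_concat, List.getLastD_concat, List.cons_append, List.cons_append]
  simp only [List.headD_cons, List.tail_cons, List.dropLast_concat]

theorem QuiddityReducible.exists_window {c : List A} (h : QuiddityReducible c) :
    ∃ w P : List A, w ≠ [] ∧ 3 ≤ P.length ∧ mMat w 0 0 ^ 2 = 1 ∧
      (c.IsRotated (w ++ P) ∨ c.reverse.IsRotated (w ++ P)) := by
  obtain ⟨a, b, ha, hb, hbq, hc⟩ := h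
  obtain ⟨a₀, m, a₁, rfl⟩ := exists_eq_cons_append_singleton (by omega : 2 ≤ a.length)
  obtain ⟨x, w, y, rfl⟩ := exists_eq_cons_append_singleton (by omega : 2 ≤ b.length)
  refine ⟨w, (a₀ + y) :: m ++ [a₁ + x], ?_, by simpa using ha,
    sq_mMat_zero_zero_of_isQuiddity hbq, ?_⟩
  · rintro rfl
    simp at hb
  · have hrot : (oplus (a₀ :: m ++ [a₁]) (x :: w ++ [y])).IsRotated
        (w ++ ((a₀ + y) :: m ++ [a₁ + x])) := by
      rw [oplus_cons_append]
      simpa using List.isRotated_append (l := (a₀ + y) :: m ++ [a₁ + x]) (l' := w)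
    rcases hc with hc | hc
    exacts [Or.inl (hc.trans hrot), Or.inr (hc.trans hrot)]

theorem pow_fin_two_upper (a c d : A) (q : ℕ) :
    !![a, c * (d - a); 0, d] ^ q = !![a ^ q, c * (d ^ q - a ^ q); 0, d ^ q] := by
  induction q with
  | zero => simp [Matrix.one_fin_two]
  | succ q ih =>
    rw [pow_succ, ih, Matrix.mul_fin_two]
    ext i j
    fin_cases i <;> fin_cases j <;> simp <;> ring

theorem pow_fin_two_lower (a c d : A) (q : ℕ) :
    !![a, 0; c * (a - d), d] ^ q = !![a ^ q, 0; c * (a ^ q - d ^ q), d ^ q] := by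
  induction q with
  | zero => simp [Matrix.one_fin_two]
  | succ q ih =>
    rw [pow_succ, ih, Matrix.mul_fin_two]
    ext i j
    fin_cases i <;> fin_cases j <;> simp <;> ring

theorem sq_neg_pow (x : A) (q : ℕ) : ((-x) ^ q) ^ 2 = x ^ (2 * q) := by
  rw [← pow_mul, mul_comm, pow_mul, neg_sq, ← pow_mul]

theorem sq_mul_neg_pow (x : A) (q : ℕ) : (x * (-x) ^ q) ^ 2 = x ^ (2 * (q + 1)) := by
  rw [mul_pow, sq_neg_pow]
  ring

section Trinomial

variable {u v : A}

theorem mMat_uvv_pow (huv : u * v = 1) (q : ℕ) :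
    mMat [u, v, v] ^ q = !![(-u) ^ q, v * ((-v) ^ q - (-u) ^ q); 0, (-v) ^ q] := by
  rw [← pow_fin_two_upper]
  congr 1
  ext i j
  fin_cases i <;> fin_cases j <;> simp [mMat]
  · linear_combination v * huv
  · linear_combination -huv
  · linear_combination huv

theorem mMat_vvu_pow (huv : u * v = 1) (q : ℕ) :
    mMat [v, v, u] ^ q = !![(-u) ^ q, 0; v * ((-u) ^ q - (-v) ^ q), (-v) ^ q] := by
  rw [← pow_fin_two_lower]
  congr 1
  ext i j
  fin_cases i <;> fin_cases j <;> simp [mMat]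
  · linear_combination v * huv
  · linear_combination -huv
  · linear_combination huv

theorem mMat_vuv_pow (huv : u * v = 1) (q : ℕ) :
    mMat [v, u, v] ^ q = !![(-v) ^ q, 0; 0, (-u) ^ q] := by
  have hM : mMat [v, u, v] = !![-v, 0; 0, -u] := by
    ext i j
    fin_cases i <;> fin_cases j <;> simp [mMat]
    · linear_combination v * huv
    · linear_combination -huv
    · linear_combination huv
  simpa [hM] using pow_fin_two_upper (-v) 0 (-u) q

theorem pow_eq_one_of_mul_eq_one (huv : u * v = 1) {n : ℕ} (h : v ^ n = 1) : u ^ n = 1 := by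
  calc u ^ n = u ^ n * v ^ n := by rw [h, mul_one]
    _ = 1 := by rw [← mul_pow, huv, one_pow]

theorem mMat_triList (huv : u * v = 1) (q : ℕ) :
    mMat (triList q u v) = !![(-u) ^ q, v * ((-v) ^ q - (-u) ^ q); 0, (-v) ^ q] := by
  rw [triList_eq_flatten_replicate, mMat_flatten_replicate, mMat_uvv_pow huv]

theorem isQuiddity_triList_iff [IsDomain A] (huv : u * v = 1) (m : ℕ) :
    IsQuiddity (triList m u v) ↔ u ^ (2 * m) = 1 := by
  constructor
  · intro h
    rw [← sq_neg_pow]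
    rcases h with h | h <;> have h00 := congrFun (congrFun h 0) 0 <;>
      simp [mMat_triList huv] at h00 <;> simp [h00]
  · intro h
    have hvu : (-v) ^ m = (-u) ^ m := by
      have : v ^ m = u ^ m := calc
        v ^ m = v ^ m * u ^ (2 * m) := by rw [h, mul_one]
        _ = (u * v) ^ m * u ^ m := by ring
        _ = u ^ m := by rw [huv, one_pow, one_mul]
      rw [neg_pow v, neg_pow u, this]
    refine isQuiddity_of_mMat_eq (x := (-u) ^ m) ?_ (by rw [sq_neg_pow, h])
    rw [mMat_triList huv, hvu, sub_self, mul_zero]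

/-- In a domain, `u` is a root of `X^{2l} + X^{l+1} - 1` or of `X^{2l} - X^{l+1} - 1` iff this
product vanishes. -/
def trinomialProd (u : A) (l : ℕ) : A :=
  (u ^ (2 * l) + u ^ (l + 1) - 1) * (u ^ (2 * l) - u ^ (l + 1) - 1)

theorem trinomialProd_sub {k l : ℕ} (hk : u ^ (2 * k) = 1) (hl : l ≤ k) :
    trinomialProd u (k - l) = u ^ (4 * (k - l)) * trinomialProd u l := by
  obtain ⟨m, rfl⟩ := Nat.exists_eq_add_of_le hl
  rw [Nat.add_sub_cancel_left, trinomialProd, trinomialProd]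
  linear_combination (2 * u ^ (2 * m) + u ^ (2 * m + 2) - 1 - u ^ (2 * (l + m))) * hk

theorem mMat_vvu_window (huv : u * v = 1) (q : ℕ) :
    mMat ((List.replicate q [v, v, u]).flatten ++ [v, v]) 0 0 = v ^ 2 * (-v) ^ q - (-u) ^ q := by
  rw [mMat_append, mMat_flatten_replicate, mMat_vvu_pow huv]
  simp [mMat, Matrix.mul_apply, Fin.sum_univ_two]
  ring

theorem sq_vvu_window_eq_one_iff (huv : u * v = 1) (q : ℕ) :
    (v ^ 2 * (-v) ^ q - (-u) ^ q) ^ 2 = 1 ↔ trinomialProd u (q + 1) = 0 := by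
  have hprod : (-v) ^ q * (-u) ^ q = 1 := by rw [← mul_pow, neg_mul_neg, mul_comm, huv, one_pow]
  have huv' : u ^ (2 * q + 4) * v ^ (2 * q + 4) = 1 := by rw [← mul_pow, huv, one_pow]
  have hP : trinomialProd u (q + 1) =
      u ^ (2 * q + 4) * ((v ^ 2 * (-v) ^ q - (-u) ^ q) ^ 2 - 1) := by
    rw [trinomialProd]
    linear_combination (-u ^ (2 * q + 4)) * sq_neg_pow u q +
      (-u ^ (2 * q + 4) * v ^ 4) * sq_neg_pow v q - huv' + 2 * u ^ (2 * q + 4) * v ^ 2 * hprod +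
      2 * u ^ (2 * q + 2) * (u * v + 1) * huv
  constructor
  · intro h
    rw [hP, h, sub_self, mul_zero]
  · intro h
    linear_combination
      v ^ (2 * q + 4) * (h - hP) - ((v ^ 2 * (-v) ^ q - (-u) ^ q) ^ 2 - 1) * huv'

theorem exists_of_rotate_triList_eq_append [Nontrivial A] (huv : u * v = 1) {k n : ℕ}
    {w P : List A} (h : (triList k u v).rotate n = w ++ P) (hw : w ≠ []) (hP : P ≠ [])
    (hsq : mMat w 0 0 ^ 2 = 1) :
    (∃ m, 0 < m ∧ 3 * m ≤ w.length + 2 ∧ u ^ (2 * m) = 1) ∨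
      ∃ l, 3 * l = w.length + 1 ∧ trinomialProd u l = 0 := by
  rw [triList_eq_flatten_replicate, rotate_flatten_replicate, ← List.rotate_mod] at h
  rw [mMat_eq_of_flatten_replicate_eq_append h hP] at hsq
  have hw0 : 0 < w.length := List.length_pos_of_ne_nil hw
  obtain ⟨q, s, hs, hj⟩ : ∃ q s, s < 3 ∧ w.length = 3 * q + s :=
    ⟨w.length / 3, w.length % 3, Nat.mod_lt _ (by norm_num), (Nat.div_add_mod _ _).symm⟩
  simp only [List.length_rotate, List.length_cons, List.length_nil, hj] at hsq
  rw [Nat.mul_add_mod, Nat.mul_add_div (by norm_num), Nat.mod_eq_of_lt hs, Nat.div_eq_of_lt hs,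
    add_zero] at hsq
  rw [hj]
  have hr : n % 3 < 3 := Nat.mod_lt _ (by norm_num)
  -- Corner entries, for the blocks (u,v,v), (v,v,u), (v,u,v) and s = 0, 1, 2:
  -- (-u)^q, u(-u)^q, 0 | (-u)^q, v(-v)^q, v²(-v)^q - (-u)^q | (-v)^q, v(-v)^q, 0.
  interval_cases n % 3 <;> interval_cases s <;>
    simp only [List.rotate_zero, show [u, v, v].rotate 1 = [v, v, u] from rfl,
      show [u, v, v].rotate 2 = [v, u, v] from rfl, mMat_uvv_pow huv, mMat_vvu_pow huv,
      mMat_vuv_pow huv] at hsq <;>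
    simp [mMat, Matrix.mul_apply, Fin.sum_univ_two] at hsq
  · exact Or.inl ⟨q, by omega, by omega, by rwa [← sq_neg_pow]⟩
  · exact Or.inl ⟨q + 1, by omega, by omega, by rwa [← sq_mul_neg_pow]⟩
  · rw [mul_comm v u, huv] at hsq
    simp at hsq
  · exact Or.inl ⟨q, by omega, by omega, by rwa [← sq_neg_pow]⟩
  · rw [show v * (-u) ^ q + -(v * ((-u) ^ q - (-v) ^ q)) = v * (-v) ^ q by ring,
      sq_mul_neg_pow] at hsq
    exact Or.inl ⟨q + 1, by omega, by omega, pow_eq_one_of_mul_eq_one huv hsq⟩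
  · refine Or.inr ⟨q + 1, by omega, (sq_vvu_window_eq_one_iff huv q).1 ?_⟩
    rw [← hsq]
    ring
  · rw [sq_neg_pow] at hsq
    exact Or.inl ⟨q, by omega, by omega, pow_eq_one_of_mul_eq_one huv hsq⟩
  · rw [sq_mul_neg_pow] at hsq
    exact Or.inl ⟨q + 1, by omega, by omega, pow_eq_one_of_mul_eq_one huv hsq⟩
  · rw [huv] at hsq
    simp at hsq

theorem quiddityReducible_triList [IsDomain A] (huv : u * v = 1) {k l : ℕ} (hl : 0 < l)
    (hlk : l < k) (h : trinomialProd u l = 0) : QuiddityReducible (triList k u v) := by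
  obtain ⟨q, rfl⟩ : ∃ q, l = q + 1 := ⟨l - 1, by omega⟩
  have hw : v :: v :: triList q u v = (List.replicate q [v, v, u]).flatten ++ [v, v] := by
    rw [triList_eq_flatten_replicate]
    exact (flatten_replicate_append_comm [v, v] [u] q).symm
  have hsq : mMat (v :: v :: triList q u v) 0 0 ^ 2 = 1 := by
    rw [hw, mMat_vvu_window huv]
    exact (sq_vvu_window_eq_one_iff huv q).2 h
  obtain ⟨x, y, hb⟩ : ∃ x y, IsQuiddity (x :: (v :: v :: triList q u v) ++ [y]) :=
    ⟨_, _, isQuiddity_of_sq_mMat_zero_zero hsq⟩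
  refine ⟨(u - y) :: (v :: v :: triList (k - q - 2) u v) ++ [u - x], _, by simp, by simp, hb,
    Or.inl ?_⟩
  rw [oplus_cons_append, sub_add_cancel, sub_add_cancel]
  have hk : triList k u v = triList (k - q - 2 + 1) u v ++ triList (q + 1) u v := by
    rw [triList_append]
    congr 1
    omega
  rw [hk]
  exact List.IsRotated.refl _

theorem exists_trinomialProd_eq_zero_of_quiddityReducible [IsDomain A] (huv : u * v = 1)
    {k : ℕ} (hmin : ∀ m, 0 < m → u ^ (2 * m) = 1 → k ≤ m)
    (hred : QuiddityReducible (triList k u v)) :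
    ∃ l, 0 < l ∧ l < k ∧ trinomialProd u l = 0 := by
  obtain ⟨w, P, hw, hP, hsq, hrot⟩ := hred.exists_window
  have hrot' : (triList k u v).IsRotated (w ++ P) := by
    rcases hrot with h | h
    · exact h
    · rw [reverse_triList] at h
      exact List.IsRotated.trans ⟨1, rfl⟩ h
  obtain ⟨n, hn⟩ := hrot'
  have hlen := congrArg List.length hn
  rw [List.length_rotate, length_triList, List.length_append] at hlen
  rcases exists_of_rotate_triList_eq_append huv hn hw (by rintro rfl; simp at hP) hsq with
    ⟨m, hm0, hm, hum⟩ | ⟨l, hl, hprod⟩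
  · exact absurd (hmin m hm0 hum) (by omega)
  · exact ⟨l, by omega, by omega, hprod⟩

end Trinomial

end Quiddity

theorem stmt13_general (K : Type*) [Field K] (u : Kˣ) (k : ℕ)
    (hq : IsQuiddity (triList k (u : K) ((u⁻¹ : Kˣ) : K)))
    (hmin : ∀ j, 0 < j → IsQuiddity (triList j (u : K) ((u⁻¹ : Kˣ) : K)) → k ≤ j) :
    ¬ QuiddityReducible (triList k (u : K) ((u⁻¹ : Kˣ) : K)) ↔
      ∀ l : ℕ, 1 ≤ l → l ≤ 3 * k / 6 →
        (u : K) ^ (2 * l) + (u : K) ^ (l + 1) - 1 ≠ 0 ∧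
        (u : K) ^ (2 * l) - (u : K) ^ (l + 1) - 1 ≠ 0 := by
  have huv : (u : K) * ((u⁻¹ : Kˣ) : K) = 1 := u.mul_inv
  have hk : (u : K) ^ (2 * k) = 1 := (isQuiddity_triList_iff huv k).1 hq
  have hmin_pow : ∀ m, 0 < m → (u : K) ^ (2 * m) = 1 → k ≤ m := fun m hm h =>
    hmin m hm ((isQuiddity_triList_iff huv m).2 h)
  simp only [← mul_ne_zero_iff, show 3 * k / 6 = k / 2 by omega]
  change _ ↔ ∀ l, 1 ≤ l → l ≤ k / 2 → trinomialProd (u : K) l ≠ 0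
  constructor
  · intro hirr l hl hlk hprod
    exact hirr (quiddityReducible_triList huv hl (by omega) hprod)
  · intro hall hred
    obtain ⟨l, hl, hlk, hprod⟩ :=
      exists_trinomialProd_eq_zero_of_quiddityReducible huv hmin_pow hred
    rcases le_or_gt l (k / 2) with h | h
    · exact hall l hl h hprod
    · exact hall (k - l) (by omega) (by omega)
        (by rw [trinomialProd_sub hk hlk.le, hprod, mul_zero])

/-- for `u ≠ ±1`, the `u`-trinomial minimal solution of size `m = 3k` is
irreducible iff `u` is not a root of `X^{2l} ± X^{l+1} − 1` for `1 ≤ l ≤ ⌊m/6⌋`. -/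
theorem stmt13 (K : Type*) [Field K] [Fintype K] (u : Kˣ)
    (hu1 : (u : K) ≠ 1) (hu2 : (u : K) ≠ -1) (k : ℕ) (hk : 0 < k)
    (hq : IsQuiddity (triList k (u : K) ((u⁻¹ : Kˣ) : K)))
    (hmin : ∀ j, 0 < j → IsQuiddity (triList j (u : K) ((u⁻¹ : Kˣ) : K)) → k ≤ j) :
    ¬ QuiddityReducible (triList k (u : K) ((u⁻¹ : Kˣ) : K)) ↔
      ∀ l : ℕ, 1 ≤ l → l ≤ 3 * k / 6 →
        (u : K) ^ (2 * l) + (u : K) ^ (l + 1) - 1 ≠ 0 ∧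
        (u : K) ^ (2 * l) - (u : K) ^ (l + 1) - 1 ≠ 0 :=
  stmt13_general K u k hq hmin
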